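/- arXiv:1902.08134 — 2 statements merged into one kernel-verified Lean document; each statement's English description precedes it below -/
import Mathlib

section
/- For fixed probability densities p and q on ℝ (with q > 0 wherever needed), the function D ↦ ∫ (a·p(x)·log D(x) + b·q(x)·log(1 - D(x))) dx, over measurable functions D : ℝ → (0,1), is pointwise maximized by D*(x) = a·p(x) / (a·p(x) + b·q(x)), for positive constants a, b. -/
/-!
`log t ≤ t - 1` at `t = s x / A` gives the tangent-line bound
`A log x ≤ A log (A / s) + s x - A`. Adding it for `(A, D)` and `(B, 1 - D)` with `s = A + B`,
the linear terms cancel because `D + (1 - D) = 1`, and `1 - A / s = B / s`.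
-/

open MeasureTheory Real

lemma Real.mul_log_le_mul_log_div_add_mul_sub {A s x : ℝ} (hA : 0 ≤ A) (hs : 0 < s)
    (hx : 0 < x) : A * log x ≤ A * log (A / s) + s * x - A := by
  rcases hA.eq_or_lt with rfl | hA
  · simpa using (mul_pos hs hx).le
  have hsx : 0 < s * x / A := by positivity
  calc A * log x = A * log (A / s) + A * log (s * x / A) := by
        rw [← mul_add, ← log_mul (by positivity) hsx.ne']
        congr 2
        field_simp
    _ ≤ A * log (A / s) + A * (s * x / A - 1) := by
        gcongr
        exact log_le_sub_one_of_pos hsx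
    _ = A * log (A / s) + s * x - A := by
        field_simp
        ring

lemma Real.mul_log_add_mul_log_one_sub_le {A B D : ℝ} (hA : 0 ≤ A) (hB : 0 ≤ B)
    (hAB : 0 < A + B) (hD : D ∈ Set.Ioo (0 : ℝ) 1) :
    A * log D + B * log (1 - D)
      ≤ A * log (A / (A + B)) + B * log (1 - A / (A + B)) := by
  have hD₀ := mul_log_le_mul_log_div_add_mul_sub hA hAB hD.1
  have hD₁ := mul_log_le_mul_log_div_add_mul_sub hB hAB (sub_pos.2 hD.2)
  have hcompl : 1 - A / (A + B) = B / (A + B) := by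
    field_simp
    ring
  rw [hcompl]
  linarith

theorem optimal_discriminator_pointwise_general
    (a b : ℝ) (ha : 0 < a) (hb : 0 < b)
    (p q : ℝ → ℝ) (hp : ∀ x, 0 ≤ p x) (hq : ∀ x, 0 ≤ q x)
    (hpq : ∀ x, 0 < a * p x + b * q x)
    (Dstar : ℝ → ℝ) (hDstar : ∀ x, Dstar x = a * p x / (a * p x + b * q x)) :
    ∀ D : ℝ → ℝ, Measurable D → (∀ x, D x ∈ Set.Ioo (0 : ℝ) 1) →
      (∀ x, a * p x * Real.log (D x) + b * q x * Real.log (1 - D x)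
          ≤ a * p x * Real.log (Dstar x) + b * q x * Real.log (1 - Dstar x))
      ∧ (Integrable (fun x => a * p x * Real.log (D x) + b * q x * Real.log (1 - D x)) →
         Integrable (fun x => a * p x * Real.log (Dstar x) + b * q x * Real.log (1 - Dstar x)) →
         ∫ x, (a * p x * Real.log (D x) + b * q x * Real.log (1 - D x))
           ≤ ∫ x, (a * p x * Real.log (Dstar x) + b * q x * Real.log (1 - Dstar x))) := by
  intro D _ hD
  have pointwise : ∀ x, a * p x * log (D x) + b * q x * log (1 - D x)
      ≤ a * p x * log (Dstar x) + b * q x * log (1 - Dstar x) := fun x => by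
    rw [hDstar x]
    exact mul_log_add_mul_log_one_sub_le (mul_nonneg ha.le (hp x)) (mul_nonneg hb.le (hq x))
      (hpq x) (hD x)
  exact ⟨pointwise, fun hint hint_star => integral_mono hint hint_star pointwise⟩

/-- Optimal-discriminator lemma (pointwise form): for positive weights `a, b` and
nonnegative densities `p, q` on ℝ with `a·p x + b·q x > 0`, the integrand
`a·p x·log (D x) + b·q x·log (1 - D x)` is pointwise maximized, over measurable
`D : ℝ → (0,1)`, by `D* x = a·p x / (a·p x + b·q x)`; hence the integral functional
is maximized by `D*` as well. -/
theorem optimal_discriminator_pointwise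
    (a b : ℝ) (ha : 0 < a) (hb : 0 < b)
    (p q : ℝ → ℝ) (hp : ∀ x, 0 ≤ p x) (hq : ∀ x, 0 ≤ q x)
    (hpq : ∀ x, 0 < a * p x + b * q x)
    (hpmeas : Measurable p) (hqmeas : Measurable q)
    (hpint : Integrable p) (hqint : Integrable q)
    (hpprob : ∫ x, p x = 1) (hqprob : ∫ x, q x = 1)
    (Dstar : ℝ → ℝ) (hDstar : ∀ x, Dstar x = a * p x / (a * p x + b * q x)) :
    ∀ D : ℝ → ℝ, Measurable D → (∀ x, D x ∈ Set.Ioo (0 : ℝ) 1) →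
      (∀ x, a * p x * Real.log (D x) + b * q x * Real.log (1 - D x)
          ≤ a * p x * Real.log (Dstar x) + b * q x * Real.log (1 - Dstar x))
      ∧ (Integrable (fun x => a * p x * Real.log (D x) + b * q x * Real.log (1 - D x)) →
         Integrable (fun x => a * p x * Real.log (Dstar x) + b * q x * Real.log (1 - Dstar x)) →
         ∫ x, (a * p x * Real.log (D x) + b * q x * Real.log (1 - D x))
           ≤ ∫ x, (a * p x * Real.log (Dstar x) + b * q x * Real.log (1 - Dstar x))) :=
  optimal_discriminator_pointwise_general a b ha hb p q hp hq hpq Dstar hDstar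
end

section
/- Let p and q be probability densities on ℝ and define V(p,q) = ∫ p(x)·log(p(x)/(p(x)+q(x))) dx + ∫ q(x)·log(q(x)/(p(x)+q(x))) dx. Then V(p,q) ≥ −log 4, with equality if and only if p = q almost everywhere. -/
open MeasureTheory Real

lemma mul_log_div_lb {x y : ℝ} (hx : 0 < x) (hy : 0 < y) :
    x - y ≤ x * Real.log (x / y) ∧ (x * Real.log (x / y) = x - y ↔ x = y) := by
  have hdiv : 0 < y / x := div_pos hy hx
  have hkey : Real.log (y / x) = - Real.log (x / y) := by
    rw [← Real.log_inv, inv_div]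
  have h3 : x * (y / x) = y := by field_simp
  have hlog : Real.log (y / x) ≤ y / x - 1 := Real.log_le_sub_one_of_pos hdiv
  have hmul : x * Real.log (y / x) ≤ x * (y / x - 1) :=
    mul_le_mul_of_nonneg_left hlog hx.le
  constructor
  · nlinarith [hmul]
  constructor
  · intro heq
    by_contra hne
    have hne' : y / x ≠ 1 := by
      intro h
      apply hne
      field_simp at h
      linarith
    have hstrict : Real.log (y / x) < y / x - 1 :=
      Real.log_lt_sub_one_of_pos hdiv hne'
    have hmul' : x * Real.log (y / x) < x * (y / x - 1) :=
      (mul_lt_mul_iff_right₀ hx).2 hstrict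
    nlinarith [hmul']
  · intro h
    subst h
    rw [div_self hx.ne', Real.log_one]
    ring

lemma gan_pointwise (a b : ℝ) (ha : 0 ≤ a) (hb : 0 ≤ b) :
    0 ≤ a * Real.log (a / (a + b)) + b * Real.log (b / (a + b)) + (a + b) * Real.log 2 ∧
    (a * Real.log (a / (a + b)) + b * Real.log (b / (a + b)) + (a + b) * Real.log 2 = 0
      ↔ a = b) := by
  have hlog2 : 0 < Real.log 2 := Real.log_pos (by norm_num)
  rcases ha.eq_or_lt with hA | hA
  · rcases hb.eq_or_lt with hB | hB
    · subst hA; subst hB; simp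
    · -- a = 0, b > 0
      subst hA
      rw [zero_add, div_self hB.ne', Real.log_one]
      constructor
      · nlinarith
      · constructor
        · intro h; nlinarith
        · intro h; exfalso; exact hB.ne' h.symm
  · rcases hb.eq_or_lt with hB | hB
    · -- a > 0, b = 0
      subst hB
      rw [add_zero, div_self hA.ne', Real.log_one]
      constructor
      · nlinarith
      · constructor
        · intro h; nlinarith
        · intro h; exfalso; exact hA.ne' h
    · -- both positive
      set y : ℝ := (a + b) / 2 with hy_def
      have hy : 0 < y := by positivity
      have hs : 0 < a + b := by linarith
      have e1 : Real.log (a / y) = Real.log (a / (a + b)) + Real.log 2 := by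
        have : a / y = a / (a + b) * 2 := by
          rw [hy_def]; field_simp
        rw [this, Real.log_mul (by positivity) (by norm_num)]
      have e2 : Real.log (b / y) = Real.log (b / (a + b)) + Real.log 2 := by
        have : b / y = b / (a + b) * 2 := by
          rw [hy_def]; field_simp
        rw [this, Real.log_mul (by positivity) (by norm_num)]
      have hE : a * Real.log (a / (a + b)) + b * Real.log (b / (a + b))
          + (a + b) * Real.log 2 = a * Real.log (a / y) + b * Real.log (b / y) := by
        rw [e1, e2]; ring
      have h1 := mul_log_div_lb hA hy
      have h2 := mul_log_div_lb hB hy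
      have hsum : a - y + (b - y) = 0 := by rw [hy_def]; ring
      constructor
      · rw [hE]; linarith [h1.1, h2.1]
      · constructor
        · intro heq
          rw [hE] at heq
          have ea : a * Real.log (a / y) = a - y := by linarith [h1.1, h2.1]
          have : a = y := h1.2.1 ea
          rw [hy_def] at this; linarith
        · intro h
          subst h
          rw [hE]
          have hya : y = a := by rw [hy_def]; ring
          rw [hya, div_self hA.ne', Real.log_one]
          ring

/-- GAN minimax value with optimal discriminator: for probability densities `p, q` on ℝ,
`V(p,q) = ∫ p·log(p/(p+q)) + ∫ q·log(q/(p+q)) ≥ -log 4`, with equality iff `p = q` a.e. -/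
theorem gan_value_ge_neg_log_four
    (p q : ℝ → ℝ) (hp : ∀ x, 0 ≤ p x) (hq : ∀ x, 0 ≤ q x)
    (hpmeas : Measurable p) (hqmeas : Measurable q)
    (hpint : Integrable p) (hqint : Integrable q)
    (hpprob : ∫ x, p x = 1) (hqprob : ∫ x, q x = 1)
    (h1 : Integrable (fun x => p x * Real.log (p x / (p x + q x))))
    (h2 : Integrable (fun x => q x * Real.log (q x / (p x + q x)))) :
    (-Real.log 4 ≤ (∫ x, p x * Real.log (p x / (p x + q x)))
        + (∫ x, q x * Real.log (q x / (p x + q x))))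
    ∧ ((∫ x, p x * Real.log (p x / (p x + q x)))
        + (∫ x, q x * Real.log (q x / (p x + q x))) = -Real.log 4
        ↔ p =ᵐ[volume] q) := by
  set g : ℝ → ℝ := fun x => p x * Real.log (p x / (p x + q x))
      + q x * Real.log (q x / (p x + q x)) + (p x + q x) * Real.log 2 with hg_def
  have hc : Integrable (fun x => (p x + q x) * Real.log 2) :=
    (hpint.add hqint).mul_const _
  have hg : Integrable g := (h1.add h2).add hc
  have hlog4 : Real.log 4 = 2 * Real.log 2 := by
    rw [show (4 : ℝ) = 2 ^ 2 by norm_num, Real.log_pow]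
    push_cast; ring
  have hIg : ∫ x, g x = (∫ x, p x * Real.log (p x / (p x + q x)))
      + (∫ x, q x * Real.log (q x / (p x + q x))) + Real.log 4 := by
    have eA : ∫ x, (p x * Real.log (p x / (p x + q x))
        + q x * Real.log (q x / (p x + q x)) + (p x + q x) * Real.log 2)
        = (∫ x, (p x * Real.log (p x / (p x + q x))
            + q x * Real.log (q x / (p x + q x)))) + ∫ x, (p x + q x) * Real.log 2 :=
      integral_add (h1.add h2) hc
    have eB : ∫ x, (p x * Real.log (p x / (p x + q x))
        + q x * Real.log (q x / (p x + q x)))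
        = (∫ x, p x * Real.log (p x / (p x + q x)))
          + ∫ x, q x * Real.log (q x / (p x + q x)) := integral_add h1 h2
    have eC : ∫ x, (p x + q x) * Real.log 2 = (∫ x, (p x + q x)) * Real.log 2 :=
      integral_mul_const _ _
    have eD : ∫ x, (p x + q x) = 2 := by
      rw [integral_add hpint hqint, hpprob, hqprob]; norm_num
    simp only [hg_def]
    rw [eA, eB, eC, eD, hlog4]
  have hnn : ∀ x, 0 ≤ g x := fun x => (gan_pointwise _ _ (hp x) (hq x)).1
  have hint0 : 0 ≤ ∫ x, g x := integral_nonneg hnn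
  constructor
  · linarith [hint0, hIg]
  · have hzero : (∫ x, g x) = 0 ↔ g =ᵐ[volume] 0 :=
      integral_eq_zero_iff_of_nonneg hnn hg
    constructor
    · intro heq
      have : (∫ x, g x) = 0 := by rw [hIg]; linarith
      have hae : g =ᵐ[volume] 0 := hzero.1 this
      filter_upwards [hae] with x hx
      exact (gan_pointwise _ _ (hp x) (hq x)).2.1 hx
    · intro hae
      have hgz : g =ᵐ[volume] 0 := by
        filter_upwards [hae] with x hx
        exact (gan_pointwise _ _ (hp x) (hq x)).2.2 hx
      have : (∫ x, g x) = 0 := hzero.2 hgz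
      rw [hIg] at this
      linarith
end
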